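/- arXiv:2506.18265 — 2 statements merged into one kernel-verified Lean document; each statement's English description precedes it below -/
import Mathlib

section
/- Let n, r ∈ ℕ, let C, A₁, …, A_r be real symmetric n×n matrices, b ∈ ℝ^r, let L ⊆ [n]×[n], and fix bounds u_{ij} ≤ l_{ij} for (i,j) ∈ L. Define the ISDP feasible set F = {X symmetric : ⟨A_i,X⟩ = b_i for all i ∈ [r], X ⪰ 0, and for all (i,j) ∈ L, X_{ij} ∈ ℤ and u_{ij} ≤ X_{ij} ≤ l_{ij}}. Let X^L be a symmetric matrix, let (y, γ, S) with γ supported on L, y ∈ ℝ^r, and S := C − Σ_{i=1}^r y_i A_i − γ ⪰ 0, and suppose X' ∈ F satisfies X'_{ij} = X^L_{ij} for all (i,j) ∈ L and ⟨C, X'⟩ = bᵀy + ⟨γ, X^L⟩ (strong duality between SDP(X^L) and DSDP(X^L)). Define the outer-approximation feasible set G = {X symmetric : ⟨A_i,X⟩ = b_i for all i ∈ [r], ⟨X, S⟩ ≥ 0, and for all (i,j) ∈ L, X_{ij} ∈ ℤ and u_{ij} ≤ X_{ij} ≤ l_{ij}}. If X̂ ∈ G satisfies ⟨C, X̂⟩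 ≤ ⟨C, Y⟩ for all Y ∈ G and X̂_{ij} = X^L_{ij} for all (i,j) ∈ L, then X' is globally optimal for the ISDP, i.e. ⟨C, X'⟩ ≤ ⟨C, Y⟩ for all Y ∈ F. -/
/-!
Every `Y ∈ F` is positive semidefinite, so `⟨Y, S⟩ ≥ 0` and `F ⊆ G`; hence `⟨C, X̂⟩` is a lower
bound for the ISDP. On the other hand, for any `Z` with `⟨Aᵢ, Z⟩ = bᵢ` that agrees with `X^L` on
`L`, expanding `S` gives `⟨C, Z⟩ = bᵀy + ⟨γ, X^L⟩ + ⟨Z, S⟩`. Applied to `Z = X̂`, whose cut value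
is nonnegative, this shows that the dual value `bᵀy + ⟨γ, X^L⟩ = ⟨C, X'⟩` is at most `⟨C, X̂⟩`.
-/

open Matrix

namespace Matrix

variable {n : Type*} [Fintype n]

open scoped MatrixOrder ComplexOrder in
theorem PosSemidef.trace_mul_nonneg {𝕜 : Type*} [RCLike 𝕜] {X S : Matrix n n 𝕜}
    (hX : X.PosSemidef) (hS : S.PosSemidef) : 0 ≤ (X * S).trace := by
  classical
  obtain ⟨B, rfl⟩ := CStarAlgebra.nonneg_iff_eq_star_mul_self.mp hS.nonneg
  rw [star_eq_conjTranspose, ← Matrix.mul_assoc, trace_mul_comm, ← Matrix.mul_assoc]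
  exact (hX.mul_mul_conjTranspose_same B).trace_nonneg

theorem trace_transpose_mul_congr_of_support {R : Type*} [NonUnitalNonAssocSemiring R]
    {L : Set (n × n)} {γ Z W : Matrix n n R} (hγ : ∀ i j, (i, j) ∉ L → γ i j = 0)
    (hZW : ∀ i j, (i, j) ∈ L → Z i j = W i j) : (γᵀ * Z).trace = (γᵀ * W).trace := by
  simp only [trace, diag, mul_apply, transpose_apply]
  refine Finset.sum_congr rfl fun i _ => Finset.sum_congr rfl fun j _ => ?_
  by_cases h : (j, i) ∈ L
  · rw [hZW j i h]
  · rw [hγ j i h, zero_mul, zero_mul]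

theorem trace_mul_sub_sum_smul_sub {R ι : Type*} [CommRing R] [Fintype ι]
    (Z C γ : Matrix n n R) (A : ι → Matrix n n R) (y : ι → R) :
    (Z * (C - ∑ i, y i • A i - γ)).trace
      = (C * Z).trace - ∑ i, y i * (A i * Z).trace - (γ * Z).trace := by
  simp only [mul_sub, Matrix.mul_sum, mul_smul_comm, trace_sub, trace_sum, trace_smul,
    smul_eq_mul, trace_mul_comm Z]

end Matrix

theorem stmt_1_general (n r : ℕ) (C : Matrix (Fin n) (Fin n) ℝ)
    (A : Fin r → Matrix (Fin n) (Fin n) ℝ)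
    (b : Fin r → ℝ) (L : Set (Fin n × Fin n)) (u l : Fin n → Fin n → ℝ)
    (XL : Matrix (Fin n) (Fin n) ℝ)
    -- dual feasible triple (y, γ, S) for DSDP(X^L)
    (y : Fin r → ℝ) (γ : Matrix (Fin n) (Fin n) ℝ) (hγ : γ.IsSymm)
    (hγsupp : ∀ i j, (i, j) ∉ L → γ i j = 0)
    (hSpsd : (C - ∑ i, y i • A i - γ).PosSemidef)
    -- the ISDP feasible set F
    (F : Set (Matrix (Fin n) (Fin n) ℝ))
    (hF : F = {X | X.IsSymm ∧ (∀ i, (A i * X).trace = b i) ∧ X.PosSemidef ∧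
      ∀ p ∈ L, (∃ m : ℤ, X p.1 p.2 = (m : ℝ)) ∧
        u p.1 p.2 ≤ X p.1 p.2 ∧ X p.1 p.2 ≤ l p.1 p.2})
    -- the outer-approximation feasible set G
    (G : Set (Matrix (Fin n) (Fin n) ℝ))
    (hG : G = {X | X.IsSymm ∧ (∀ i, (A i * X).trace = b i) ∧
      (X * (C - ∑ i, y i • A i - γ)).trace ≥ 0 ∧
      ∀ p ∈ L, (∃ m : ℤ, X p.1 p.2 = (m : ℝ)) ∧
        u p.1 p.2 ≤ X p.1 p.2 ∧ X p.1 p.2 ≤ l p.1 p.2})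
    -- X' : primal optimal for SDP(X^L), with strong duality
    (X' : Matrix (Fin n) (Fin n) ℝ)
    (hstrong : (C * X').trace = (∑ i, b i * y i) + (γ * XL).trace)
    -- X̂ : optimal for the outer approximation, with integer part X^L
    (Xhat : Matrix (Fin n) (Fin n) ℝ) (hXhatG : Xhat ∈ G)
    (hXhatopt : ∀ Y ∈ G, (C * Xhat).trace ≤ (C * Y).trace)
    (hXhatfix : ∀ i j, (i, j) ∈ L → Xhat i j = XL i j) :
    ∀ Y ∈ F, (C * X').trace ≤ (C * Y).trace := by
  subst hF hG
  obtain ⟨-, hXhatA, hXhatcut, -⟩ := hXhatG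
  have hγXhat : (γ * Xhat).trace = (γ * XL).trace := by
    simpa only [hγ.eq] using trace_transpose_mul_congr_of_support hγsupp hXhatfix
  have hyA : ∑ i, y i * (A i * Xhat).trace = ∑ i, b i * y i :=
    Finset.sum_congr rfl fun i _ => by rw [hXhatA i, mul_comm]
  have hX'Xhat : (C * X').trace ≤ (C * Xhat).trace := by
    have := trace_mul_sub_sum_smul_sub Xhat C γ A y
    rw [hyA, hγXhat] at this
    linarith
  rintro Y ⟨hYsymm, hYA, hYpsd, hYL⟩
  exact hX'Xhat.trans <| hXhatopt Y ⟨hYsymm, hYA, hYpsd.trace_mul_nonneg hSpsd, hYL⟩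

/-- termination argument for the outer approximation algorithm.
If strong duality holds between `SDP(X^L)` and `DSDP(X^L)` with primal optimal
`X'`, and the outer approximation `OASDP` (with the single cut `⟨X, S⟩ ≥ 0`)
has an optimal solution `X̂` whose integer part equals `X^L`, then `X'` is
globally optimal for the ISDP. -/
theorem stmt_1 (n r : ℕ) (C : Matrix (Fin n) (Fin n) ℝ) (hC : C.IsSymm)
    (A : Fin r → Matrix (Fin n) (Fin n) ℝ) (hA : ∀ i, (A i).IsSymm)
    (b : Fin r → ℝ) (L : Set (Fin n × Fin n)) (u l : Fin n → Fin n → ℝ)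
    (hul : ∀ p ∈ L, u p.1 p.2 ≤ l p.1 p.2)
    (XL : Matrix (Fin n) (Fin n) ℝ) (hXL : XL.IsSymm)
    -- dual feasible triple (y, γ, S) for DSDP(X^L)
    (y : Fin r → ℝ) (γ : Matrix (Fin n) (Fin n) ℝ) (hγ : γ.IsSymm)
    (hγsupp : ∀ i j, (i, j) ∉ L → γ i j = 0)
    (hSpsd : (C - ∑ i, y i • A i - γ).PosSemidef)
    -- the ISDP feasible set F
    (F : Set (Matrix (Fin n) (Fin n) ℝ))
    (hF : F = {X | X.IsSymm ∧ (∀ i, (A i * X).trace = b i) ∧ X.PosSemidef ∧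
      ∀ p ∈ L, (∃ m : ℤ, X p.1 p.2 = (m : ℝ)) ∧
        u p.1 p.2 ≤ X p.1 p.2 ∧ X p.1 p.2 ≤ l p.1 p.2})
    -- the outer-approximation feasible set G
    (G : Set (Matrix (Fin n) (Fin n) ℝ))
    (hG : G = {X | X.IsSymm ∧ (∀ i, (A i * X).trace = b i) ∧
      (X * (C - ∑ i, y i • A i - γ)).trace ≥ 0 ∧
      ∀ p ∈ L, (∃ m : ℤ, X p.1 p.2 = (m : ℝ)) ∧
        u p.1 p.2 ≤ X p.1 p.2 ∧ X p.1 p.2 ≤ l p.1 p.2})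
    -- X' : primal optimal for SDP(X^L), with strong duality
    (X' : Matrix (Fin n) (Fin n) ℝ) (hX'F : X' ∈ F)
    (hX'fix : ∀ i j, (i, j) ∈ L → X' i j = XL i j)
    (hstrong : (C * X').trace = (∑ i, b i * y i) + (γ * XL).trace)
    -- X̂ : optimal for the outer approximation, with integer part X^L
    (Xhat : Matrix (Fin n) (Fin n) ℝ) (hXhatG : Xhat ∈ G)
    (hXhatopt : ∀ Y ∈ G, (C * Xhat).trace ≤ (C * Y).trace)
    (hXhatfix : ∀ i j, (i, j) ∈ L → Xhat i j = XL i j) :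
    ∀ Y ∈ F, (C * X').trace ≤ (C * Y).trace :=
  stmt_1_general n r C A b L u l XL y γ hγ hγsupp hSpsd F hF G hG X' hstrong Xhat hXhatG hXhatopt
    hXhatfix
end

section
/- Let n, r, q ∈ ℕ, C, A₁, …, A_r real symmetric n×n matrices, d₀, d₁, …, d_r ∈ ℝⁿ, b ∈ ℝ^r, D ∈ ℝ^{q×n}, and t ∈ ℝ^q. Define the BQCQP objective-value set V₁ = { xᵀCx + 2d₀ᵀx : x ∈ ℝⁿ, x_i ∈ {0,1} for all i, xᵀA_ix + 2d_iᵀx ≤ b_i for all i ∈ [r], Dx = t }, and the BSDP objective-value set V₂ = { ⟨C, X⟩ + 2d₀ᵀx : X real symmetric n×n, x ∈ ℝⁿ, ⟨A_i, X⟩ + 2d_iᵀx ≤ b_i for all i ∈ [r], Dx = t, X − xxᵀ ⪰ 0, diag(X) = x, x_i ∈ {0,1} for all i }. Then V₁ = V₂; in particular, the two optimization problems have the same optimal value. -/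
/-!
A binary vector satisfies `xᵢ² = xᵢ`, so lifting `x` to `X = xxᵀ` turns every BQCQP point into a
BSDP point with the same objective value. Conversely, for a BSDP point the positive semidefinite
matrix `X - xxᵀ` has diagonal `xᵢ - xᵢ² = 0`, hence trace zero, hence vanishes: `X = xxᵀ`.
-/

open Matrix

section

variable {ι : Type*} [Fintype ι]

lemma Matrix.trace_mul_vecMulVec_self {R : Type*} [CommSemiring R] (M : Matrix ι ι R)
    (x : ι → R) : (M * vecMulVec x x).trace = x ⬝ᵥ M *ᵥ x := by
  rw [mul_vecMulVec, trace_vecMulVec, dotProduct_comm]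

open scoped ComplexOrder in
lemma Matrix.PosSemidef.eq_zero_of_diag_eq_zero {𝕜 : Type*} [RCLike 𝕜] {M : Matrix ι ι 𝕜}
    (hM : M.PosSemidef) (hdiag : ∀ i, M i i = 0) : M = 0 :=
  hM.trace_eq_zero_iff.mp (Finset.sum_eq_zero fun i _ => hdiag i)

lemma Matrix.eq_vecMulVec_self_of_binary {X : Matrix ι ι ℝ} {x : ι → ℝ}
    (hpsd : (X - vecMulVec x x).PosSemidef) (hdiag : ∀ i, X i i = x i)
    (hbin : ∀ i, x i = 0 ∨ x i = 1) : X = vecMulVec x x := by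
  refine sub_eq_zero.mp (hpsd.eq_zero_of_diag_eq_zero fun i => ?_)
  rcases hbin i with h | h <;> simp [vecMulVec_apply, hdiag i, h]

end

theorem stmt_13_general (n r q : ℕ)
    (C : Matrix (Fin n) (Fin n) ℝ)
    (A : Fin r → Matrix (Fin n) (Fin n) ℝ)
    (d0 : Fin n → ℝ) (d : Fin r → Fin n → ℝ) (b : Fin r → ℝ)
    (D : Matrix (Fin q) (Fin n) ℝ) (t : Fin q → ℝ) :
    {val : ℝ | ∃ x : Fin n → ℝ, (∀ i, x i = 0 ∨ x i = 1) ∧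
        (∀ i : Fin r, x ⬝ᵥ A i *ᵥ x + 2 * (d i ⬝ᵥ x) ≤ b i) ∧
        D *ᵥ x = t ∧
        val = x ⬝ᵥ C *ᵥ x + 2 * (d0 ⬝ᵥ x)} =
    {val : ℝ | ∃ (X : Matrix (Fin n) (Fin n) ℝ) (x : Fin n → ℝ), X.IsSymm ∧
        (∀ i : Fin r, (A i * X).trace + 2 * (d i ⬝ᵥ x) ≤ b i) ∧
        D *ᵥ x = t ∧
        (X - vecMulVec x x).PosSemidef ∧
        (∀ i, X i i = x i) ∧
        (∀ i, x i = 0 ∨ x i = 1) ∧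
        val = (C * X).trace + 2 * (d0 ⬝ᵥ x)} := by
  ext val
  constructor
  · rintro ⟨x, hbin, hcons, hlin, rfl⟩
    have hdiag : ∀ i, vecMulVec x x i i = x i := fun i => by
      rcases hbin i with h | h <;> simp [vecMulVec_apply, h]
    refine ⟨vecMulVec x x, x, transpose_vecMulVec x x, ?_, hlin, by simpa using PosSemidef.zero,
      hdiag, hbin, by rw [trace_mul_vecMulVec_self]⟩
    simpa only [trace_mul_vecMulVec_self] using hcons
  · rintro ⟨X, x, -, hcons, hlin, hpsd, hdiag, hbin, rfl⟩
    obtain rfl := eq_vecMulVec_self_of_binary hpsd hdiag hbin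
    refine ⟨x, hbin, ?_, hlin, by rw [trace_mul_vecMulVec_self]⟩
    simpa only [trace_mul_vecMulVec_self] using hcons

/-- exactness of the BSDP reformulation of a BQCQP — the set of
attainable objective values of the BQCQP equals that of the BSDP. -/
theorem stmt_13 (n r q : ℕ)
    (C : Matrix (Fin n) (Fin n) ℝ) (hC : C.IsSymm)
    (A : Fin r → Matrix (Fin n) (Fin n) ℝ) (hA : ∀ i, (A i).IsSymm)
    (d0 : Fin n → ℝ) (d : Fin r → Fin n → ℝ) (b : Fin r → ℝ)
    (D : Matrix (Fin q) (Fin n) ℝ) (t : Fin q → ℝ) :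
    {val : ℝ | ∃ x : Fin n → ℝ, (∀ i, x i = 0 ∨ x i = 1) ∧
        (∀ i : Fin r, x ⬝ᵥ A i *ᵥ x + 2 * (d i ⬝ᵥ x) ≤ b i) ∧
        D *ᵥ x = t ∧
        val = x ⬝ᵥ C *ᵥ x + 2 * (d0 ⬝ᵥ x)} =
    {val : ℝ | ∃ (X : Matrix (Fin n) (Fin n) ℝ) (x : Fin n → ℝ), X.IsSymm ∧
        (∀ i : Fin r, (A i * X).trace + 2 * (d i ⬝ᵥ x) ≤ b i) ∧
        D *ᵥ x = t ∧
        (X - vecMulVec x x).PosSemidef ∧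
        (∀ i, X i i = x i) ∧
        (∀ i, x i = 0 ∨ x i = 1) ∧
        val = (C * X).trace + 2 * (d0 ⬝ᵥ x)} :=
  stmt_13_general n r q C A d0 d b D t
end
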